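/- arXiv:2002.01754 — 2 statements merged into one kernel-verified Lean document; each statement's English description precedes it below -/
import Mathlib

section
/- Let (X,d) be a complete b-metric space with coefficient s ≥ 1, let θ ∈ X be a fixed element, and let E be a nonempty, bounded and closed subset of X. For each i ∈ ℕ₀ let T_i : X → X be a weak quasi-contraction that is O-b continuous, and suppose diam O_{T_j}(T_i x, T_i y) ≤ diam O_{T_j}(x,y) for all x,y ∈ X and all i,j ∈ ℕ₀. Let 𝔉 be a nonempty set of mappings f : ℕ₀ → ℕ₀ with property (F). Assume (P3): for each e ∈ E and each i ∈ ℕ₀ there exists e′ ∈ E with T_i(e′) = e; and (P4): for each ε, K > 0 there exists n_{ε,K} ∈ ℕ such that for each f ∈ 𝔉 and each x ∈ X with diam O_{T_i}(x, θ) ≤ K/s for all i ∈ ℕ₀, one has d(T_{f(n_{ε,K})}T_{f(n_{ε,K}−1)}⋯T_{f(1)}T_{f(0)}x, E) < ε. Let {δ_i}_{i=0}^∞ be a sequence of positive numbers with lim_{i→∞} δ_i = 0. Then for each ε, K > 0 there exists ñ ∈ ℕ such that for each f ∈ 𝔉 and each sequence {x_i}_{i=0}^∞ ⊆ X satisfying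 diam O_{T_j}(x_i, θ) ≤ K/s for all i,j ∈ ℕ₀ and diam O_{T_{f(j)}}(x_{i+1}, T_{f(i)}x_i) ≤ δ_i for all i,j ∈ ℕ₀, one has d(x_i, E) < ε for all i ≥ ñ. -/
open Set Filter Topology

/-- The orbit of `x` under `T`: `{Tⁿ x : n ∈ ℕ₀}`. -/
def orb {X : Type*} (T : X → X) (x : X) : Set X := {y | ∃ n : ℕ, y = T^[n] x}

/-- The double orbit `O_T(x,y) = O_T(x) ∪ O_T(y)`. -/
def orb2 {X : Type*} (T : X → X) (x y : X) : Set X := orb T x ∪ orb T y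

/-- The set of pairwise distances of points of `A`. -/
def distSet {X : Type*} (d : X → X → ℝ) (A : Set X) : Set ℝ :=
  {r | ∃ a ∈ A, ∃ b ∈ A, r = d a b}

/-- The diameter of `A` with respect to the distance function `d`. -/
noncomputable def diamd {X : Type*} (d : X → X → ℝ) (A : Set X) : ℝ :=
  sSup (distSet d A)

/-- The distance from a point to a set: `inf {d x a : a ∈ A}`. -/
noncomputable def distPtSet {X : Type*} (d : X → X → ℝ) (x : X) (A : Set X) : ℝ :=
  sInf {r | ∃ a ∈ A, r = d x a}

/-- `d` is a b-metric on `X` with coefficient `s ≥ 1`. -/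
def IsBMetric {X : Type*} (d : X → X → ℝ) (s : ℝ) : Prop :=
  1 ≤ s ∧ (∀ x y, 0 ≤ d x y) ∧ (∀ x y, d x y = 0 ↔ x = y) ∧ (∀ x y, d x y = d y x) ∧
    (∀ x y z, d x y ≤ s * (d x z + d z y))

/-- `(X,d)` is a complete b-metric space with coefficient `s`. -/
def IsCompleteBMetric {X : Type*} (d : X → X → ℝ) (s : ℝ) : Prop :=
  IsBMetric d s ∧
    ∀ u : ℕ → X, (∀ ε > (0 : ℝ), ∃ N : ℕ, ∀ m ≥ N, ∀ n ≥ N, d (u m) (u n) < ε) →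
      ∃ x : X, Tendsto (fun n => d (u n) x) atTop (𝓝 0)

/-- `ψ : [0,∞) → [0,∞)` is increasing, upper semicontinuous, `ψ 0 = 0`, `ψ t < t` for `t > 0`. -/
def IsComparison (ψ : ℝ → ℝ) : Prop :=
  MonotoneOn ψ (Ici 0) ∧ UpperSemicontinuousOn ψ (Ici 0) ∧
    (∀ t ≥ (0 : ℝ), 0 ≤ ψ t) ∧ ψ 0 = 0 ∧ ∀ t > (0 : ℝ), ψ t < t

/-- `T` is a weak quasi-contraction: bounded orbits and
`d(Tx,Ty) ≤ ψ(diam O_T(x,y))` for some comparison function `ψ`. -/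
def IsWeakQuasiContraction {X : Type*} (d : X → X → ℝ) (T : X → X) : Prop :=
  (∀ x y, BddAbove (distSet d (orb2 T x y))) ∧
    ∃ ψ : ℝ → ℝ, IsComparison ψ ∧ ∀ x y, d (T x) (T y) ≤ ψ (diamd d (orb2 T x y))

/-- `E` is closed with respect to `d`-convergence. -/
def IsClosedD {X : Type*} (d : X → X → ℝ) (E : Set X) : Prop :=
  ∀ (u : ℕ → X) (x : X), (∀ n, u n ∈ E) →
    Tendsto (fun n => d (u n) x) atTop (𝓝 0) → x ∈ E

/-- `T` is O-b continuous: `x_n → x` implies `diam O_T(x_n, x) → 0`. -/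
def OBContinuous {X : Type*} (d : X → X → ℝ) (T : X → X) : Prop :=
  ∀ (u : ℕ → X) (x : X), Tendsto (fun n => d (u n) x) atTop (𝓝 0) →
    Tendsto (fun n => diamd d (orb2 T (u n) x)) atTop (𝓝 0)

/-- The composition `T_{f n} ∘ T_{f (n-1)} ∘ ⋯ ∘ T_{f 0}`. -/
def compSeq {X : Type*} (T : ℕ → X → X) (f : ℕ → ℕ) : ℕ → X → X
  | 0 => T (f 0)
  | n + 1 => fun x => T (f (n + 1)) (compSeq T f n x)

/-- Property (F): `𝓕` is closed under shifts by positive naturals. -/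
def PropF (𝓕 : Set (ℕ → ℕ)) : Prop :=
  ∀ f ∈ 𝓕, ∀ p : ℕ, 0 < p → (fun i => f (i + p)) ∈ 𝓕

lemma mem_orb2_left' {X : Type*} {T : X → X} (x y : X) : x ∈ orb2 T x y := Or.inl ⟨0, rfl⟩

lemma mem_orb2_right' {X : Type*} {T : X → X} (x y : X) : y ∈ orb2 T x y := Or.inr ⟨0, rfl⟩

lemma d_le_diamd' {X : Type*} (d : X → X → ℝ) {A : Set X} (hbdd : BddAbove (distSet d A))
    {a b : X} (ha : a ∈ A) (hb : b ∈ A) : d a b ≤ diamd d A :=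
  le_csSup hbdd ⟨a, ha, b, hb, rfl⟩

lemma diamd_nonneg' {X : Type*} {d : X → X → ℝ} (hd : ∀ x y, d x y = 0 ↔ x = y) {A : Set X}
    (hbdd : BddAbove (distSet d A)) {a : X} (ha : a ∈ A) : 0 ≤ diamd d A := by
  have h := d_le_diamd' d hbdd ha ha
  rwa [(hd a a).mpr rfl] at h

lemma diam_tri' {X : Type*} {d : X → X → ℝ} {s : ℝ} (hd : IsBMetric d s)
    (T : X → X) (hb : ∀ x y, BddAbove (distSet d (orb2 T x y))) (a b c : X) :
    diamd d (orb2 T a c) ≤ 2 * s * (diamd d (orb2 T a b) + diamd d (orb2 T b c)) := by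
  obtain ⟨hs, hpos, heq, hsymm, htri⟩ := hd
  set Dab := diamd d (orb2 T a b) with hDab
  set Dbc := diamd d (orb2 T b c) with hDbc
  have hab0 : 0 ≤ Dab := diamd_nonneg' heq (hb a b) (mem_orb2_left' a b)
  have hbc0 : 0 ≤ Dbc := diamd_nonneg' heq (hb b c) (mem_orb2_left' b c)
  have key : ∀ u ∈ orb2 T a c, d u b ≤ Dab + Dbc := by
    rintro u (hu | hu)
    · exact le_add_of_le_of_nonneg
        (d_le_diamd' d (hb a b) (Or.inl hu) (mem_orb2_right' a b)) hbc0
    · exact le_add_of_nonneg_of_le hab0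
        (d_le_diamd' d (hb b c) (Or.inr hu) (mem_orb2_left' b c))
  have hne : (distSet d (orb2 T a c)).Nonempty :=
    ⟨d a a, a, mem_orb2_left' a c, a, mem_orb2_left' a c, rfl⟩
  apply csSup_le hne
  rintro r ⟨u, hu, v, hv, rfl⟩
  have h2 : d b v ≤ Dab + Dbc := by rw [hsymm]; exact key v hv
  calc d u v ≤ s * (d u b + d b v) := htri u v b
    _ ≤ s * ((Dab + Dbc) + (Dab + Dbc)) :=
        mul_le_mul_of_nonneg_left (add_le_add (key u hu) h2) (by linarith)
    _ = 2 * s * (Dab + Dbc) := by ring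

theorem stmt9 {X : Type*} (d : X → X → ℝ) (s : ℝ)
    (hX : IsCompleteBMetric d s) (θ : X)
    (E : Set X) (hE : E.Nonempty) (hEbdd : BddAbove (distSet d E))
    (hEcl : IsClosedD d E)
    (T : ℕ → X → X) (hT : ∀ i : ℕ, IsWeakQuasiContraction d (T i))
    (hOb : ∀ i : ℕ, OBContinuous d (T i))
    (hmono : ∀ i j : ℕ, ∀ x y : X,
      diamd d (orb2 (T j) (T i x) (T i y)) ≤ diamd d (orb2 (T j) x y))
    (𝓕 : Set (ℕ → ℕ)) (h𝓕 : 𝓕.Nonempty) (hF : PropF 𝓕)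
    (hP3 : ∀ e ∈ E, ∀ i : ℕ, ∃ e' ∈ E, T i e' = e)
    (hP4 : ∀ ε > (0 : ℝ), ∀ K > (0 : ℝ), ∃ n : ℕ, ∀ f ∈ 𝓕, ∀ x : X,
      (∀ i : ℕ, diamd d (orb2 (T i) x θ) ≤ K / s) →
      distPtSet d (compSeq T f n x) E < ε)
    (δs : ℕ → ℝ) (hδs : ∀ i, 0 < δs i)
    (hδs0 : Tendsto δs atTop (𝓝 0)) :
    ∀ ε > (0 : ℝ), ∀ K > (0 : ℝ), ∃ ntil : ℕ, ∀ f ∈ 𝓕, ∀ x : ℕ → X,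
      (∀ i j : ℕ, diamd d (orb2 (T j) (x i) θ) ≤ K / s) →
      (∀ i j : ℕ, diamd d (orb2 (T (f j)) (x (i + 1)) (T (f i) (x i))) ≤ δs i) →
      ∀ i ≥ ntil, distPtSet d (x i) E < ε := by
  have hbm := hX.1
  obtain ⟨hs, hpos, heq, hsymm, htri⟩ := hX.1
  intro ε hε K hK
  have hs0 : 0 < s := lt_of_lt_of_le one_pos hs
  have h4s : (1:ℝ) ≤ 4 * s := by linarith
  have h4s0 : (0:ℝ) < 4 * s := by linarith
  obtain ⟨n, hn⟩ := hP4 (ε / (2*s)) (by positivity) K hK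
  set η : ℝ := ε / (2 * (4*s)^(n+2)) with hη_def
  have hη : 0 < η := by positivity
  obtain ⟨N, hN⟩ := Metric.tendsto_atTop.mp hδs0 η hη
  have hδlt : ∀ j ≥ N, δs j < η := by
    intro j hj
    have := hN j hj
    rw [Real.dist_eq, sub_zero] at this
    exact (abs_lt.mp this).2
  refine ⟨N + n + 2, ?_⟩
  intro f hf x hx1 hx2 i hi
  obtain ⟨p, hpN, rfl⟩ : ∃ p, N < p ∧ i = p + n + 1 := ⟨i - n - 1, by omega, by omega⟩
  set f' : ℕ → ℕ := fun j => f (j + p) with hf'_def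
  have hf' : f' ∈ 𝓕 := hF f hf p (by omega)
  -- key recurrence
  have hrec : ∀ k, diamd d (orb2 (T (f 0)) (x (p+k+1)) (compSeq T f' k (x p)))
      ≤ η * (4*s)^(k+1) := by
    intro k
    induction k with
    | zero =>
      have e0 : compSeq T f' 0 (x p) = T (f p) (x p) := by
        show T (f' 0) (x p) = _
        rw [show f' 0 = f p from congrArg f (Nat.zero_add p)]
      rw [e0]
      have h1 : diamd d (orb2 (T (f 0)) (x (p+0+1)) (T (f p) (x p))) ≤ δs p := hx2 p 0
      have h2 : δs p < η := hδlt p (by omega)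
      have h3 : η ≤ η * (4*s)^(0+1) := by rw [pow_one]; nlinarith
      linarith
    | succ k ih =>
      have e1 : compSeq T f' (k+1) (x p) = T (f (p+k+1)) (compSeq T f' k (x p)) := by
        show T (f' (k+1)) _ = _
        rw [show f' (k+1) = f (p+k+1) from congrArg f (by omega)]
      rw [e1]
      have htr := diam_tri' hbm (T (f 0)) (hT (f 0)).1 (x (p+(k+1)+1))
        (T (f (p+k+1)) (x (p+k+1))) (T (f (p+k+1)) (compSeq T f' k (x p)))
      have hD1 : diamd d (orb2 (T (f 0)) (x (p+(k+1)+1)) (T (f (p+k+1)) (x (p+k+1)))) ≤ δs (p+k+1) := by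
        have := hx2 (p+k+1) 0
        convert this using 4 <;> omega
      have hD1' : diamd d (orb2 (T (f 0)) (x (p+(k+1)+1)) (T (f (p+k+1)) (x (p+k+1)))) < η :=
        lt_of_le_of_lt hD1 (hδlt (p+k+1) (by omega))
      have hD2 : diamd d (orb2 (T (f 0)) (T (f (p+k+1)) (x (p+k+1)))
          (T (f (p+k+1)) (compSeq T f' k (x p)))) ≤ η * (4*s)^(k+1) :=
        le_trans (hmono (f (p+k+1)) (f 0) (x (p+k+1)) (compSeq T f' k (x p))) ih
      have h1le : (1:ℝ) ≤ (4*s)^(k+1) := one_le_pow₀ h4s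
      have hpow : (4*s)^(k+1+1) = (4*s)^(k+1) * (4*s) := pow_succ _ _
      have hstep1 := mul_le_mul_of_nonneg_left (add_le_add hD1'.le hD2)
        (by linarith : (0:ℝ) ≤ 2*s)
      have hstep2 : 2*s*(η + η*(4*s)^(k+1)) ≤ η*(4*s)^(k+1+1) := by
        rw [hpow]
        nlinarith [mul_nonneg (mul_nonneg hη.le hs0.le) (sub_nonneg.mpr h1le)]
      linarith
  -- distance from x (p+n+1) to the true orbit point
  set w : X := compSeq T f' n (x p) with hw_def
  have hxw : d (x (p+n+1)) w ≤ η * (4*s)^(n+1) := by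
    refine le_trans ?_ (hrec n)
    exact d_le_diamd' d ((hT (f 0)).1 _ _) (mem_orb2_left' _ _) (mem_orb2_right' _ _)
  -- P4 application
  have hP4app : distPtSet d w E < ε / (2*s) := hn f' hf' (x p) (fun j => hx1 p j)
  -- extract a close point of E
  have hSne : {r | ∃ a ∈ E, r = d w a}.Nonempty := ⟨d w hE.choose, hE.choose, hE.choose_spec, rfl⟩
  obtain ⟨r, ⟨e, heE, rfl⟩, hre⟩ := exists_lt_of_csInf_lt hSne hP4app
  -- final estimate
  have hle : distPtSet d (x (p+n+1)) E ≤ d (x (p+n+1)) e := by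
    have hbb : BddBelow {r | ∃ a ∈ E, r = d (x (p+n+1)) a} := by
      refine ⟨0, ?_⟩
      rintro r ⟨a, -, rfl⟩
      exact hpos _ _
    exact csInf_le hbb ⟨e, heE, rfl⟩
  have h8 : (8:ℝ) * s ≠ 0 := by positivity
  have hkey : η * (4*s)^(n+1) * (8*s) = ε := by
    rw [hη_def, pow_succ]
    field_simp
    ring
  have hA : d (x (p+n+1)) w ≤ ε / (8*s) := by
    have : ε / (8*s) = η * (4*s)^(n+1) := by rw [← hkey, mul_div_cancel_right₀ _ h8]
    rw [this]; exact hxw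
  have htri2 : d (x (p+n+1)) e ≤ s * (d (x (p+n+1)) w + d w e) := htri _ _ _
  have hmul : s * (d (x (p+n+1)) w + d w e) < s * (ε/(8*s) + ε/(2*s)) :=
    mul_lt_mul_of_pos_left (add_lt_add_of_le_of_lt hA hre) hs0
  have hval : s * (ε/(8*s) + ε/(2*s)) = ε/8 + ε/2 := by field_simp
  linarith
end

section
/- Let (X,d) be a complete b-metric space with coefficient s ≥ 1. For each i ∈ ℕ₀ let T_i : X → X be a weak quasi-contraction satisfying diam O_{T_j}(T_i x, T_i y) ≤ diam O_{T_j}(x,y) for all x,y ∈ X and all i,j ∈ ℕ₀. Let 𝔉 be a nonempty set of mappings f : ℕ₀ → ℕ₀ with property (F). Assume (P8): for each ε > 0 there exists n_ε ∈ ℕ such that for each f ∈ 𝔉 and each x,y ∈ X one has d(T_{f(n_ε)}T_{f(n_ε−1)}⋯T_{f(1)}T_{f(0)}x, T_{f(n_ε)}T_{f(n_ε−1)}⋯T_{f(1)}T_{f(0)}y) < ε. Let {δ_i}_{i=0}^∞ be a sequence of positive numbers with lim_{i→∞} δ_i = 0. Then for each ε > 0 there exists n̆ ∈ ℕ such that for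 each f ∈ 𝔉 and each pair of sequences {x_i}_{i=0}^∞, {y_i}_{i=0}^∞ ⊆ X satisfying diam O_{T_{f(j)}}(x_{i+1}, T_{f(i)}x_i) ≤ δ_i and diam O_{T_{f(j)}}(y_{i+1}, T_{f(i)}y_i) ≤ δ_i for all i,j ∈ ℕ₀, one has d(x_i, y_i) < ε for all i ≥ n̆. -/
open Set Filter Topology

lemma dist_le_diamd {X : Type*} (d : X → X → ℝ) {T : X → X} {u v : X}
    (h : BddAbove (distSet d (orb2 T u v))) : d u v ≤ diamd d (orb2 T u v) :=
  le_csSup h ⟨u, Or.inl ⟨0, rfl⟩, v, Or.inr ⟨0, rfl⟩, rfl⟩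

lemma orb2_comm {X : Type*} (T : X → X) (a b : X) : orb2 T a b = orb2 T b a :=
  Set.union_comm _ _

lemma chainB {X : Type*} (d : X → X → ℝ) (s : ℝ) (hB : IsBMetric d s) :
    ∀ (k : ℕ) (u : ℕ → X) (c : ℝ), 0 ≤ c → (∀ m, m ≤ k → d (u m) (u (m+1)) ≤ c) →
    d (u 0) (u (k+1)) ≤ ((k:ℝ)+1) * s^(k+1) * c := by
  obtain ⟨hs, hnn, -, -, htri⟩ := hB
  have s0 : (0:ℝ) < s := lt_of_lt_of_le one_pos hs
  intro k
  induction k with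
  | zero =>
    intro u c hc h
    have h0 := h 0 le_rfl
    have : (((0:ℕ):ℝ)+1) * s^(0+1) * c = s * c := by norm_num
    rw [this]
    nlinarith [hnn (u 0) (u 1)]
  | succ k ih =>
    intro u c hc h
    have t := htri (u 0) (u (k+2)) (u 1)
    have h2 : d (u 1) (u (k+1+1)) ≤ ((k:ℝ)+1) * s^(k+1) * c :=
      ih (fun m => u (m+1)) c hc (fun m hm => h (m+1) (by omega))
    have h0 := h 0 (by omega)
    have hsk : (1:ℝ) ≤ s^(k+1) := one_le_pow₀ hs
    have hps : s^(k+1+1) = s^(k+1) * s := pow_succ s (k+1)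
    have hmul2 : s * d (u 1) (u (k+1+1)) ≤ s * (((k:ℝ)+1) * s^(k+1) * c) :=
      mul_le_mul_of_nonneg_left h2 (le_of_lt s0)
    have hmul0 : s * d (u 0) (u 1) ≤ s * c := mul_le_mul_of_nonneg_left h0 (le_of_lt s0)
    have key1 : s * c ≤ s^(k+1) * s * c := by
      calc s * c = 1 * (s * c) := by ring
        _ ≤ s^(k+1) * (s * c) := mul_le_mul_of_nonneg_right hsk (mul_nonneg (le_of_lt s0) hc)
        _ = s^(k+1) * s * c := by ring
    push_cast
    rw [hps]
    linarith [t, hmul0, hmul2, key1]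

theorem stmt11 {X : Type*} (d : X → X → ℝ) (s : ℝ)
    (hX : IsCompleteBMetric d s)
    (T : ℕ → X → X) (hT : ∀ i : ℕ, IsWeakQuasiContraction d (T i))
    (hmono : ∀ i j : ℕ, ∀ x y : X,
      diamd d (orb2 (T j) (T i x) (T i y)) ≤ diamd d (orb2 (T j) x y))
    (𝓕 : Set (ℕ → ℕ)) (h𝓕 : 𝓕.Nonempty) (hF : PropF 𝓕)
    (hP8 : ∀ ε > (0 : ℝ), ∃ n : ℕ, ∀ f ∈ 𝓕, ∀ x y : X,
      d (compSeq T f n x) (compSeq T f n y) < ε)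
    (δs : ℕ → ℝ) (hδs : ∀ i, 0 < δs i)
    (hδs0 : Tendsto δs atTop (𝓝 0)) :
    ∀ ε > (0 : ℝ), ∃ nbr : ℕ, ∀ f ∈ 𝓕, ∀ x y : ℕ → X,
      (∀ i j : ℕ, diamd d (orb2 (T (f j)) (x (i + 1)) (T (f i) (x i))) ≤ δs i) →
      (∀ i j : ℕ, diamd d (orb2 (T (f j)) (y (i + 1)) (T (f i) (y i))) ≤ δs i) →
      ∀ i ≥ nbr, d (x i) (y i) < ε := by
  obtain ⟨hB, -⟩ := hX
  obtain ⟨hs, hnn, heq0, hsym, htri⟩ := hB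
  have s0 : (0:ℝ) < s := lt_of_lt_of_le one_pos hs
  intro ε hε
  obtain ⟨n, hn⟩ := hP8 (ε / (3 * s^2)) (by positivity)
  set εδ : ℝ := ε / (3 * s^2 * (((n:ℝ)+1) * s^(n+1))) with hεδdef
  have hεδ0 : 0 < εδ := by rw [hεδdef]; positivity
  obtain ⟨N0, hN0⟩ := Metric.tendsto_atTop.mp hδs0 εδ hεδ0
  refine ⟨N0 + n + 2, ?_⟩
  intro f hf x y hx hy i hi
  set p := i - (n+1) with hpdef
  have hip : i = p + n + 1 := by omega
  have hp : 0 < p := by omega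
  have hwin : ∀ m, m ≤ n → δs (p + m) < εδ := by
    intro m hm
    have h1 := hN0 (p+m) (by omega)
    rw [Real.dist_eq, sub_zero] at h1
    exact lt_of_le_of_lt (le_abs_self _) h1
  have key : ∀ z : ℕ → X, (∀ i j, diamd d (orb2 (T (f j)) (z (i+1)) (T (f i) (z i))) ≤ δs i) →
      d (compSeq T (fun k => f (k + p)) n (z p)) (z (p+n+1)) ≤ ((n:ℝ)+1) * s^(n+1) * εδ := by
    intro z hz
    have tele : ∀ r q j, diamd d (orb2 (T (f j))
        (compSeq T (fun k => f (k+q)) (r+1) (z q))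
        (compSeq T (fun k => f (k+(q+1))) r (z (q+1)))) ≤ δs q := by
      intro r
      induction r with
      | zero =>
        intro q j
        have h1 : diamd d (orb2 (T (f j)) (T (f q) (z q)) (z (q+1))) ≤ δs q := by
          rw [orb2_comm]; exact hz q j
        have h3 : diamd d (orb2 (T (f j)) (T (f (q+1)) (T (f q) (z q)))
            (T (f (q+1)) (z (q+1)))) ≤ δs q :=
          le_trans (hmono (f (q+1)) (f j) (T (f q) (z q)) (z (q+1))) h1
        show diamd d (orb2 (T (f j)) (T (f (0+1+q)) (T (f (0+q)) (z q)))
            (T (f (0+(q+1))) (z (q+1)))) ≤ δs q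
        rw [show (0:ℕ)+1+q = q+1 from by omega, show (0:ℕ)+q = q from by omega,
          show (0:ℕ)+(q+1) = q+1 from by omega]
        exact h3
      | succ r ih =>
        intro q j
        show diamd d (orb2 (T (f j))
            (T (f (r+1+1+q)) (compSeq T (fun k => f (k+q)) (r+1) (z q)))
            (T (f (r+1+(q+1))) (compSeq T (fun k => f (k+(q+1))) r (z (q+1))))) ≤ δs q
        rw [show r+1+1+q = r+1+(q+1) from by omega]
        exact le_trans (hmono (f (r+1+(q+1))) (f j) _ _) (ih q j)
    set u : ℕ → X := fun m => if m ≤ n then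
        compSeq T (fun k => f (k + (p + m))) (n - m) (z (p + m)) else z (p+n+1) with hu
    have hstep : ∀ m, m ≤ n → d (u m) (u (m+1)) ≤ εδ := by
      intro m hm
      rcases lt_or_eq_of_le hm with hlt | hEq
      · have hr : n - m = (n - (m+1)) + 1 := by omega
        have e1 : u m = compSeq T (fun k => f (k + (p+m))) ((n - (m+1)) + 1) (z (p+m)) := by
          simp only [hu]; rw [if_pos hm, hr]
        have e2 : u (m+1) = compSeq T (fun k => f (k + ((p+m)+1))) (n - (m+1)) (z ((p+m)+1)) := by
          simp only [hu]; rw [if_pos (by omega : m+1 ≤ n)]; rfl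
        rw [e1, e2]
        refine le_trans ?_ (le_of_lt (hwin m hm))
        exact le_trans (dist_le_diamd d ((hT (f 0)).1 _ _)) (tele (n-(m+1)) (p+m) 0)
      · subst hEq
        have e1 : u m = T (f (0 + (p+m))) (z (p+m)) := by
          simp only [hu]; rw [if_pos le_rfl, Nat.sub_self]; rfl
        have e2 : u (m+1) = z (p+m+1) := by
          simp only [hu]; rw [if_neg (by omega)]
        rw [e1, e2, Nat.zero_add, hsym]
        refine le_trans ?_ (le_of_lt (hwin m le_rfl))
        exact le_trans (dist_le_diamd d ((hT (f 0)).1 _ _)) (hz (p+m) 0)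
    have hchain := chainB d s ⟨hs, hnn, heq0, hsym, htri⟩ n u εδ (le_of_lt hεδ0) hstep
    have e0 : u 0 = compSeq T (fun k => f (k + p)) n (z p) := by
      simp only [hu]; rw [if_pos (Nat.zero_le n)]; rfl
    have elast : u (n+1) = z (p+n+1) := by
      simp only [hu]; rw [if_neg (by omega)]
    rw [e0, elast] at hchain
    exact hchain
  have hKε : ((n:ℝ)+1) * s^(n+1) * εδ = ε / (3*s^2) := by
    have h1 : ((n:ℝ)+1) ≠ 0 := by positivity
    have h2 : s^(n+1) ≠ 0 := by positivity
    have h3 : s ≠ 0 := ne_of_gt s0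
    rw [hεδdef]; field_simp
  have hkx := key x hx
  have hky := key y hy
  rw [hKε] at hkx hky
  have hab := hn (fun k => f (k + p)) (hF f hf p hp) (x p) (y p)
  rw [hip]
  have t1 := htri (x (p+n+1)) (y (p+n+1)) (compSeq T (fun k => f (k + p)) n (x p))
  have t2 := htri (compSeq T (fun k => f (k + p)) n (x p)) (y (p+n+1))
    (compSeq T (fun k => f (k + p)) n (y p))
  rw [hsym] at hkx
  have hεeq : ε = 3*s^2*(ε/(3*s^2)) := by field_simp
  have hnn1 := hnn (x (p+n+1)) (compSeq T (fun k => f (k + p)) n (x p))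
  have hnn2 := hnn (compSeq T (fun k => f (k + p)) n (x p)) (compSeq T (fun k => f (k + p)) n (y p))
  have hnn3 := hnn (compSeq T (fun k => f (k + p)) n (y p)) (y (p+n+1))
  have hnn4 := hnn (compSeq T (fun k => f (k + p)) n (x p)) (y (p+n+1))
  have he : 0 < ε/(3*s^2) := by positivity
  have hse : s*(ε/(3*s^2)) ≤ (s*s)*(ε/(3*s^2)) :=
    mul_le_mul_of_nonneg_right (by nlinarith : s ≤ s*s) he.le
  nlinarith [mul_le_mul_of_nonneg_left t2 (le_of_lt s0), mul_lt_mul_of_pos_left hab (mul_pos s0 s0),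
    mul_le_mul_of_nonneg_left hky (mul_pos s0 s0).le, mul_le_mul_of_nonneg_left hkx (le_of_lt s0),
    hse, t1, hεeq]
end
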